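/- Let data points (x^ℓ, y_ℓ) ∈ ℝ^d × ℝ, ℓ = 1,…,N, be given, let k₁, k₂ ≥ 1, and for Θ = ((aⁱ, αᵢ)_{i=1}^{k₁}, (bʲ, βⱼ)_{j=1}^{k₂}) ∈ ℝ^{(k₁+k₂)(d+1)} define f(Θ) = (1/(2N)) Σ_{ℓ=1}^{N} ( y_ℓ − [ max_{1≤i≤k₁}((aⁱ)ᵀx^ℓ + αᵢ) − max_{1≤j≤k₂}((bʲ)ᵀx^ℓ + βⱼ) ] )². Then for any nonempty polyhedral set X ⊆ ℝ^{(k₁+k₂)(d+1)}, the infimum of f over X is finite and is attained at some Θ* ∈ X. -/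

import Mathlib

open Matrix Filter

noncomputable def finMax {k : ℕ} (hk : 0 < k) (g : Fin k → ℝ) : ℝ :=
  Finset.univ.sup' (Finset.univ_nonempty_iff.mpr ⟨⟨0, hk⟩⟩) g

/-- The parameter space `Θ = ((aⁱ, αᵢ)_{i=1}^{k₁}, (bʲ, βⱼ)_{j=1}^{k₂})`, a copy of
`ℝ^{(k₁+k₂)(d+1)}`. -/
abbrev RegSpace (d k₁ k₂ : ℕ) := (Fin k₁ → (Fin d → ℝ) × ℝ) × (Fin k₂ → (Fin d → ℝ) × ℝ)

/-- The least-squares piecewise affine regression objective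
`f(Θ) = (1/(2N)) Σ_ℓ (y_ℓ − [maxᵢ((aⁱ)ᵀxℓ + αᵢ) − maxⱼ((bʲ)ᵀxℓ + βⱼ)])²`. -/
noncomputable def regObj {d N k₁ k₂ : ℕ} (hk₁ : 0 < k₁) (hk₂ : 0 < k₂)
    (x : Fin N → Fin d → ℝ) (y : Fin N → ℝ) (Θ : RegSpace d k₁ k₂) : ℝ :=
  (1 / (2 * (N : ℝ))) * ∑ ℓ : Fin N, (y ℓ -
      (finMax hk₁ (fun i => (Θ.1 i).1 ⬝ᵥ x ℓ + (Θ.1 i).2) -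
       finMax hk₂ (fun j => (Θ.2 j).1 ⬝ᵥ x ℓ + (Θ.2 j).2))) ^ 2

/-- A polyhedral subset of a real normed space: the solution set of finitely many
continuous linear inequalities. -/
def IsPolyhedralE {E : Type*} [NormedAddCommGroup E] [NormedSpace ℝ E] (X : Set E) : Prop :=
  ∃ (m : ℕ) (L : Fin m → E →L[ℝ] ℝ) (b : Fin m → ℝ), X = {θ | ∀ i, L i θ ≤ b i}

/-- The one-sided directional derivative of `f` at `x` in direction `v` equals `L`. -/
def HasDirDerivE {E : Type*} [NormedAddCommGroup E] [NormedSpace ℝ E]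
    (f : E → ℝ) (x v : E) (L : ℝ) : Prop :=
  Filter.Tendsto (fun δ : ℝ => (f (x + δ • v) - f x) / δ) (nhdsWithin 0 (Set.Ioi 0)) (nhds L)

/-- `x₀` is a d(irectional)-stationary point of `f` on `X`. -/
def DStatE {E : Type*} [NormedAddCommGroup E] [NormedSpace ℝ E]
    (f : E → ℝ) (X : Set E) (x₀ : E) : Prop :=
  x₀ ∈ X ∧ ∀ x ∈ X, ∃ L, HasDirDerivE f x₀ (x - x₀) L ∧ 0 ≤ L

/-! On each of the finitely many polyhedral regions of parameter space on which fixed affine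
pieces realise all the maxima, the vector of fitted values is a linear function `A Θ` of the
parameters, and `f` is a coercive quadratic in `A Θ`. By Fourier–Motzkin elimination the image
under `A` of the intersection of `X` with such a region is again polyhedral, hence closed, so the
quadratic attains its minimum there; the least of these finitely many minima is the minimum of
`f` on `X`. -/

lemma upperBounds_inter_lowerBounds_nonempty {α : Type*} [ConditionallyCompleteLinearOrder α]
    {L U : Set α} (hL : BddAbove L) (hU : BddBelow U) (h : ∀ l ∈ L, ∀ u ∈ U, l ≤ u) :
    (upperBounds L ∩ lowerBounds U).Nonempty := by
  rcases U.eq_empty_or_nonempty with rfl | hne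
  · exact ⟨sSup L, fun l hl => le_csSup hL hl, by simp⟩
  · exact ⟨sInf U, fun l hl => le_csInf hne (h l hl), fun u hu => csInf_le hU hu⟩

/-- Fourier–Motzkin elimination of one variable: `t ↦ t * c i ≤ r i` is feasible iff every
lower bound `r j / c j` (`c j < 0`) lies below every upper bound `r i / c i` (`0 < c i`). -/
lemma exists_forall_mul_le_iff {ι : Type*} [Finite ι] (c r : ι → ℝ) :
    (∃ t, ∀ i, t * c i ≤ r i) ↔
      (∀ i, c i = 0 → 0 ≤ r i) ∧ ∀ i j, 0 < c i → c j < 0 → c j * r i ≤ c i * r j := by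
  constructor
  · rintro ⟨t, ht⟩
    refine ⟨fun i hi => by simpa [hi] using ht i, fun i j hi hj => ?_⟩
    nlinarith [ht i, ht j]
  · rintro ⟨hzero, hpair⟩
    obtain ⟨t, hlow, hup⟩ := upperBounds_inter_lowerBounds_nonempty
      (L := (fun j => r j / c j) '' {j | c j < 0}) (U := (fun i => r i / c i) '' {i | 0 < c i})
      (Set.toFinite _).bddAbove (Set.toFinite _).bddBelow (by
        rintro _ ⟨j, hj, rfl⟩ _ ⟨i, hi, rfl⟩
        rw [div_le_iff_of_neg hj, div_mul_eq_mul_div, div_le_iff₀ hi]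
        linarith [hpair i j hi hj])
    refine ⟨t, fun i => ?_⟩
    rcases lt_trichotomy (c i) 0 with hi | hi | hi
    · exact (div_le_iff_of_neg hi).1 (hlow ⟨i, hi, rfl⟩)
    · simpa [hi] using hzero i hi
    · exact (le_div_iff₀ hi).1 (hup ⟨i, hi, rfl⟩)

section Polyhedra

variable {E F : Type*} [NormedAddCommGroup E] [NormedSpace ℝ E]
  [NormedAddCommGroup F] [NormedSpace ℝ F]

lemma isPolyhedralE_setOf_forall_le {κ : Type*} [Finite κ] (L : κ → E →L[ℝ] ℝ) (b : κ → ℝ) :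
    IsPolyhedralE {θ | ∀ k, L k θ ≤ b k} := by
  let e := Finite.equivFin κ
  refine ⟨Nat.card κ, fun i => L (e.symm i), fun i => b (e.symm i), ?_⟩
  ext θ
  exact ⟨fun h i => h _, fun h k => by simpa using h (e k)⟩

lemma isPolyhedralE_halfspace (L : E →L[ℝ] ℝ) (b : ℝ) : IsPolyhedralE {θ | L θ ≤ b} :=
  ⟨1, fun _ => L, fun _ => b, by simp⟩

lemma isPolyhedralE_setOf_le (L L' : E →L[ℝ] ℝ) : IsPolyhedralE {θ | L θ ≤ L' θ} := by
  simpa [sub_nonpos] using isPolyhedralE_halfspace (L - L') 0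

lemma IsPolyhedralE.iInter {ι : Type*} [Finite ι] {S : ι → Set E}
    (h : ∀ i, IsPolyhedralE (S i)) : IsPolyhedralE (⋂ i, S i) := by
  choose m L b hS using h
  convert isPolyhedralE_setOf_forall_le (fun k : Σ i, Fin (m i) => L k.1 k.2)
    (fun k => b k.1 k.2)
  ext θ
  simp [hS, Sigma.forall]

lemma IsPolyhedralE.inter {S T : Set E} (hS : IsPolyhedralE S) (hT : IsPolyhedralE T) :
    IsPolyhedralE (S ∩ T) := by
  rw [Set.inter_eq_iInter]
  exact .iInter fun b => by cases b <;> assumption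

lemma IsPolyhedralE.preimage {S : Set E} (h : IsPolyhedralE S) (f : F →L[ℝ] E) :
    IsPolyhedralE (f ⁻¹' S) := by
  obtain ⟨m, L, b, rfl⟩ := h
  exact ⟨m, fun i => (L i).comp f, b, rfl⟩

lemma IsPolyhedralE.isClosed {S : Set E} (h : IsPolyhedralE S) : IsClosed S := by
  obtain ⟨m, L, b, rfl⟩ := h
  simpa only [Set.ofPred_forall] using
    isClosed_iInter fun i => isClosed_le (L i).continuous continuous_const

lemma isPolyhedralE_singleton_zero [FiniteDimensional ℝ E] : IsPolyhedralE ({0} : Set E) := by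
  let c i := LinearMap.toContinuousLinearMap ((Module.finBasis ℝ E).coord i)
  convert isPolyhedralE_setOf_forall_le (Sum.elim c (-c)) 0
  ext θ
  rw [Set.mem_singleton_iff, ← (Module.finBasis ℝ E).forall_coord_eq_zero_iff]
  simp [Sum.forall, c, ← forall_and, le_antisymm_iff]

lemma IsPolyhedralE.image_fst {S : Set (E × ℝ)} (hS : IsPolyhedralE S) :
    IsPolyhedralE (Prod.fst '' S) := by
  obtain ⟨m, L, b, rfl⟩ := hS
  let g i := (L i).comp (.inl ℝ E ℝ)
  let c i := L i (0, 1)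
  have hL (i : Fin m) (e : E) (t : ℝ) : L i (e, t) = g i e + t * c i := by
    calc L i (e, t) = L i ((e, 0) + t • (0, 1)) := by simp
      _ = g i e + t * c i := by rw [map_add, map_smul]; rfl
  have hfeas (e : E) : e ∈ Prod.fst '' {p | ∀ i, L i p ≤ b i} ↔
      ∃ t, ∀ i, t * c i ≤ b i - g i e := by
    simp only [Set.mem_image, Set.mem_ofPred_eq, Prod.exists, exists_and_right,
      exists_eq_right, hL, le_sub_iff_add_le']
  have hproj : Prod.fst '' {p | ∀ i, L i p ≤ b i} =
      (⋂ i : {i // c i = 0}, {e | g i e ≤ b i}) ∩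
        ⋂ p : {p : Fin m × Fin m // 0 < c p.1 ∧ c p.2 < 0},
          {e | (c p.1.1 • g p.1.2 - c p.1.2 • g p.1.1) e ≤
            c p.1.1 * b p.1.2 - c p.1.2 * b p.1.1} := by
    ext e
    rw [hfeas, exists_forall_mul_le_iff]
    simp only [Set.mem_inter_iff, Set.mem_iInter, Set.mem_ofPred_eq, Subtype.forall, Prod.forall,
      and_imp, sub_nonneg, FunLike.coe_sub, FunLike.coe_smul, Pi.sub_apply, Pi.smul_apply,
      smul_eq_mul]
    refine and_congr Iff.rfl (forall₂_congr fun i j => imp_congr_right fun _ =>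
      imp_congr_right fun _ => ?_)
    constructor <;> intro h <;> linarith
  rw [hproj]
  exact (IsPolyhedralE.iInter fun _ => isPolyhedralE_halfspace _ _).inter
    (IsPolyhedralE.iInter fun _ => isPolyhedralE_halfspace _ _)

lemma IsPolyhedralE.image_equiv {S : Set E} (h : IsPolyhedralE S) (e : E ≃L[ℝ] F) :
    IsPolyhedralE (e '' S) := by
  rw [e.image_eq_preimage_symm]
  exact h.preimage (e.symm : F →L[ℝ] E)

lemma IsPolyhedralE.image_fst_of_pi {n : ℕ} {S : Set (F × (Fin n → ℝ))}
    (hS : IsPolyhedralE S) : IsPolyhedralE (Prod.fst '' S) := by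
  induction n generalizing F with
  | zero =>
    convert hS.preimage (.inl ℝ F (Fin 0 → ℝ))
    ext z
    refine ⟨?_, fun hz => ⟨_, hz, rfl⟩⟩
    rintro ⟨⟨z, v⟩, hp, rfl⟩
    simpa [Subsingleton.elim v 0] using hp
  | succ n ih =>
    let e : (F × (Fin (n + 1) → ℝ)) ≃L[ℝ] (F × ℝ) × (Fin n → ℝ) :=
      ((ContinuousLinearEquiv.refl ℝ F).prodCongr (Fin.consEquivL ℝ fun _ => ℝ).symm).trans
        (ContinuousLinearEquiv.prodAssoc ℝ F ℝ (Fin n → ℝ)).symm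
    have h := (ih (hS.image_equiv e)).image_fst
    rwa [Set.image_image, Set.image_image] at h

lemma IsPolyhedralE.image_fst_of_finiteDimensional [FiniteDimensional ℝ E] {S : Set (F × E)}
    (hS : IsPolyhedralE S) : IsPolyhedralE (Prod.fst '' S) := by
  let e : E ≃L[ℝ] (Fin (Module.finrank ℝ E) → ℝ) :=
    (Module.finBasis ℝ E).equivFun.toContinuousLinearEquiv
  have h := (hS.image_equiv ((ContinuousLinearEquiv.refl ℝ F).prodCongr e)).image_fst_of_pi
  rwa [Set.image_image] at h

lemma IsPolyhedralE.image [FiniteDimensional ℝ E] [FiniteDimensional ℝ F] {S : Set E}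
    (hS : IsPolyhedralE S) (A : E →L[ℝ] F) : IsPolyhedralE (A '' S) := by
  let snd := ContinuousLinearMap.snd ℝ F E
  have hgraph :
      A '' S = Prod.fst '' (snd ⁻¹' S ∩ (A ∘L snd - ContinuousLinearMap.fst ℝ F E) ⁻¹' {0}) := by
    ext z
    simp [snd, sub_eq_zero]
  rw [hgraph]
  exact ((hS.preimage snd).inter
    (isPolyhedralE_singleton_zero.preimage _)).image_fst_of_finiteDimensional

end Polyhedra

lemma exists_isMinOn_iUnion {α β ι : Type*} [LinearOrder β] [Finite ι] {f : α → β}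
    {T : ι → Set α} (h : ∀ i, (T i).Nonempty → ∃ a ∈ T i, IsMinOn f (T i) a)
    (hne : (⋃ i, T i).Nonempty) : ∃ a ∈ ⋃ i, T i, IsMinOn f (⋃ i, T i) a := by
  choose a haT ha using h
  obtain ⟨_, ⟨⟨i, hi⟩, rfl⟩, hmin⟩ := Set.exists_min_image
    (Set.range fun i : {i // (T i).Nonempty} => a i i.2) f (Set.finite_range _)
    (by obtain ⟨x, hx⟩ := hne; obtain ⟨j, hj⟩ := Set.mem_iUnion.1 hx; exact ⟨_, ⟨j, ⟨x, hj⟩⟩, rfl⟩)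
  refine ⟨a i hi, Set.mem_iUnion.2 ⟨i, haT i hi⟩, fun x hx => ?_⟩
  obtain ⟨j, hj⟩ := Set.mem_iUnion.1 hx
  exact (hmin _ ⟨⟨j, x, hj⟩, rfl⟩).trans (ha j ⟨x, hj⟩ hj)

section Minimization

variable {E F : Type*} [NormedAddCommGroup E] [NormedSpace ℝ E] [FiniteDimensional ℝ E]
  [NormedAddCommGroup F] [NormedSpace ℝ F] [FiniteDimensional ℝ F]
  {q : F → ℝ}

lemma IsPolyhedralE.exists_isMinOn_comp_continuousLinearMap (hq : Continuous q)
    (hq_coercive : Tendsto q (cocompact F) atTop) (A : E →L[ℝ] F) {S : Set E}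
    (hS : IsPolyhedralE S) (hne : S.Nonempty) : ∃ θ ∈ S, IsMinOn (q ∘ A) S θ := by
  obtain ⟨θ₀, hθ₀⟩ := hne
  obtain ⟨_, ⟨θ, hθ, rfl⟩, hmin⟩ := hq.continuousOn.exists_isMinOn' (hS.image A).isClosed
    (Set.mem_image_of_mem A hθ₀)
    ((hq_coercive.eventually_ge_atTop (q (A θ₀))).filter_mono inf_le_left)
  exact ⟨θ, hθ, fun θ' hθ' => hmin (Set.mem_image_of_mem A hθ')⟩

theorem IsPolyhedralE.exists_isMinOn_comp_of_eqOn {ι : Type*} [Finite ι] (hq : Continuous q)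
    (hq_coercive : Tendsto q (cocompact F) atTop) {g : E → F} {P : ι → Set E}
    (hP : ∀ i, IsPolyhedralE (P i)) (hcover : ∀ θ, ∃ i, θ ∈ P i) {A : ι → E →L[ℝ] F}
    (hA : ∀ i, Set.EqOn g (A i) (P i)) {X : Set E} (hX : IsPolyhedralE X) (hne : X.Nonempty) :
    ∃ θ ∈ X, IsMinOn (q ∘ g) X θ := by
  have hX_eq : X = ⋃ i, X ∩ P i := by
    ext θ
    simp only [Set.mem_iUnion, Set.mem_inter_iff, exists_and_left, iff_self_and]
    exact fun _ => hcover θ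
  rw [hX_eq] at hne ⊢
  refine exists_isMinOn_iUnion (fun i hi => ?_) hne
  obtain ⟨θ, hθ, hmin⟩ := (hX.inter (hP i)).exists_isMinOn_comp_continuousLinearMap hq hq_coercive (A i) hi
  refine ⟨θ, hθ, fun θ' hθ' => ?_⟩
  simpa only [Function.comp_apply, Set.mem_ofPred_eq, hA i hθ.2, hA i hθ'.2] using hmin hθ'

end Minimization

lemma tendsto_sum_sq_sub_cocompact {ι : Type*} [Fintype ι] (y : ι → ℝ) :
    Tendsto (fun z : ι → ℝ => ∑ ℓ, (y ℓ - z ℓ) ^ 2) (cocompact (ι → ℝ)) atTop := by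
  have hnorm : Tendsto (fun z : ι → ℝ => ‖z - y‖) (cocompact _) atTop :=
    tendsto_atTop_mono (fun z => by simpa using norm_sub_norm_le z y)
      (tendsto_atTop_add_const_right _ (-‖y‖) tendsto_norm_cocompact_atTop)
  refine tendsto_atTop_mono (fun z => ?_) (hnorm.atTop_mul_atTop₀ hnorm)
  have hle : ‖z - y‖ ≤ √(∑ ℓ, (y ℓ - z ℓ) ^ 2) :=
    (pi_norm_le_iff_of_nonneg (Real.sqrt_nonneg _)).2 fun ℓ => by
      rw [Real.norm_eq_abs, Pi.sub_apply, abs_sub_comm]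
      exact Real.abs_le_sqrt (Finset.single_le_sum (fun ℓ _ => sq_nonneg (y ℓ - z ℓ))
        (Finset.mem_univ ℓ))
  calc ‖z - y‖ * ‖z - y‖ ≤ √(∑ ℓ, (y ℓ - z ℓ) ^ 2) * √(∑ ℓ, (y ℓ - z ℓ) ^ 2) :=
        mul_self_le_mul_self (norm_nonneg _) hle
    _ = ∑ ℓ, (y ℓ - z ℓ) ^ 2 := Real.mul_self_sqrt (Finset.sum_nonneg fun _ _ => sq_nonneg _)

lemma finMax_eq_of_forall_le {k : ℕ} (hk : 0 < k) {g : Fin k → ℝ} {i : Fin k}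
    (h : ∀ i', g i' ≤ g i) : finMax hk g = g i :=
  le_antisymm (Finset.sup'_le _ _ fun i' _ => h i') (Finset.le_sup' g (Finset.mem_univ i))

section MaxAffine

variable {E : Type*} [NormedAddCommGroup E] [NormedSpace ℝ E] {N k₁ k₂ : ℕ}

def selectionPiece (φ : Fin N → Fin k₁ → E →L[ℝ] ℝ) (ψ : Fin N → Fin k₂ → E →L[ℝ] ℝ)
    (s : Fin N → Fin k₁ × Fin k₂) : Set E :=
  ⋂ ℓ, (⋂ i, {θ | φ ℓ i θ ≤ φ ℓ (s ℓ).1 θ}) ∩ ⋂ j, {θ | ψ ℓ j θ ≤ ψ ℓ (s ℓ).2 θ}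

lemma isPolyhedralE_selectionPiece (φ : Fin N → Fin k₁ → E →L[ℝ] ℝ)
    (ψ : Fin N → Fin k₂ → E →L[ℝ] ℝ) (s : Fin N → Fin k₁ × Fin k₂) :
    IsPolyhedralE (selectionPiece φ ψ s) :=
  IsPolyhedralE.iInter fun _ => (IsPolyhedralE.iInter fun _ => isPolyhedralE_setOf_le _ _).inter
    (IsPolyhedralE.iInter fun _ => isPolyhedralE_setOf_le _ _)

lemma exists_mem_selectionPiece (hk₁ : 0 < k₁) (hk₂ : 0 < k₂) (φ : Fin N → Fin k₁ → E →L[ℝ] ℝ)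
    (ψ : Fin N → Fin k₂ → E →L[ℝ] ℝ) (θ : E) : ∃ s, θ ∈ selectionPiece φ ψ s := by
  have : Nonempty (Fin k₁) := ⟨⟨0, hk₁⟩⟩
  have : Nonempty (Fin k₂) := ⟨⟨0, hk₂⟩⟩
  choose i hi using fun ℓ => Finite.exists_max fun i => φ ℓ i θ
  choose j hj using fun ℓ => Finite.exists_max fun j => ψ ℓ j θ
  exact ⟨fun ℓ => (i ℓ, j ℓ), Set.mem_iInter.2 fun ℓ =>
    ⟨Set.mem_iInter.2 (hi ℓ), Set.mem_iInter.2 (hj ℓ)⟩⟩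

def selectionFit (φ : Fin N → Fin k₁ → E →L[ℝ] ℝ) (ψ : Fin N → Fin k₂ → E →L[ℝ] ℝ)
    (s : Fin N → Fin k₁ × Fin k₂) : E →L[ℝ] (Fin N → ℝ) :=
  .pi fun ℓ => φ ℓ (s ℓ).1 - ψ ℓ (s ℓ).2

lemma eqOn_selectionFit (hk₁ : 0 < k₁) (hk₂ : 0 < k₂) (φ : Fin N → Fin k₁ → E →L[ℝ] ℝ)
    (ψ : Fin N → Fin k₂ → E →L[ℝ] ℝ) (s : Fin N → Fin k₁ × Fin k₂) :
    Set.EqOn (fun θ ℓ => finMax hk₁ (fun i => φ ℓ i θ) - finMax hk₂ (fun j => ψ ℓ j θ))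
      (selectionFit φ ψ s) (selectionPiece φ ψ s) := by
  intro θ hθ
  simp only [selectionPiece, Set.mem_iInter, Set.mem_inter_iff, Set.mem_ofPred_eq] at hθ
  funext ℓ
  simp [selectionFit, finMax_eq_of_forall_le hk₁ (hθ ℓ).1, finMax_eq_of_forall_le hk₂ (hθ ℓ).2]

theorem IsPolyhedralE.exists_isMinOn_sum_sq_sub_finMax_sub_finMax [FiniteDimensional ℝ E]
    (hk₁ : 0 < k₁) (hk₂ : 0 < k₂) (φ : Fin N → Fin k₁ → E →L[ℝ] ℝ)
    (ψ : Fin N → Fin k₂ → E →L[ℝ] ℝ) (y : Fin N → ℝ) {X : Set E} (hX : IsPolyhedralE X)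
    (hne : X.Nonempty) :
    ∃ θ ∈ X, IsMinOn (fun θ => ∑ ℓ, (y ℓ -
      (finMax hk₁ (fun i => φ ℓ i θ) - finMax hk₂ (fun j => ψ ℓ j θ))) ^ 2) X θ :=
  hX.exists_isMinOn_comp_of_eqOn (by fun_prop) (tendsto_sum_sq_sub_cocompact y)
    (isPolyhedralE_selectionPiece φ ψ) (exists_mem_selectionPiece hk₁ hk₂ φ ψ)
    (eqOn_selectionFit hk₁ hk₂ φ ψ) hne

end MaxAffine

noncomputable def affineEval {d : ℕ} (w : Fin d → ℝ) : ((Fin d → ℝ) × ℝ) →L[ℝ] ℝ :=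
  LinearMap.toContinuousLinearMap
    { toFun := fun p => p.1 ⬝ᵥ w + p.2
      map_add' := fun p q => by simp only [Prod.fst_add, Prod.snd_add, add_dotProduct]; ring
      map_smul' := fun c p => by simp [smul_dotProduct, mul_add] }

theorem stmt_17_general {d N k₁ k₂ : ℕ} (hk₁ : 0 < k₁) (hk₂ : 0 < k₂)
    (x : Fin N → Fin d → ℝ) (y : Fin N → ℝ)
    (X : Set (RegSpace d k₁ k₂)) (hX : IsPolyhedralE X) (hne : X.Nonempty) :
    ∃ Θstar ∈ X, ∀ Θ ∈ X, regObj hk₁ hk₂ x y Θstar ≤ regObj hk₁ hk₂ x y Θ := by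
  let φ ℓ i : RegSpace d k₁ k₂ →L[ℝ] ℝ :=
    (affineEval (x ℓ)).comp ((ContinuousLinearMap.proj i).comp (.fst ℝ _ _))
  let ψ ℓ j : RegSpace d k₁ k₂ →L[ℝ] ℝ :=
    (affineEval (x ℓ)).comp ((ContinuousLinearMap.proj j).comp (.snd ℝ _ _))
  obtain ⟨Θstar, hmem, hmin⟩ := hX.exists_isMinOn_sum_sq_sub_finMax_sub_finMax hk₁ hk₂ φ ψ y hne
  -- `regObj hk₁ hk₂ x y` is definitionally `1 / (2 * N)` times the loss minimised by `Θstar`.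
  exact ⟨Θstar, hmem, hmin.comp_mono (monotone_mul_left_of_nonneg (by positivity))⟩

/-- Proposition 16(a): the least-squares piecewise affine regression objective attains a
finite globally minimum value on any nonempty polyhedral set `X`. -/
theorem stmt_17 {d N k₁ k₂ : ℕ} (hN : 0 < N) (hk₁ : 0 < k₁) (hk₂ : 0 < k₂)
    (x : Fin N → Fin d → ℝ) (y : Fin N → ℝ)
    (X : Set (RegSpace d k₁ k₂)) (hX : IsPolyhedralE X) (hne : X.Nonempty) :
    ∃ Θstar ∈ X, ∀ Θ ∈ X, regObj hk₁ hk₂ x y Θstar ≤ regObj hk₁ hk₂ x y Θ :=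
  stmt_17_general hk₁ hk₂ x y X hX hne
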